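/- For each fixed natural number r ≥ 0 there exists a constant M(r) > 0 such that for every natural number n ≥ 1, all reals p, q with 0 < q < p ≤ 1, every r-times continuously differentiable function f : [0,1] → ℝ, and every x ∈ [0,1]: |B^{[r]}_{n,p,q}(f; x)| ≤ M(r) · ∑_{i=0}^r sup_{u∈[0,1]} |f^{(i)}(u)|. In particular, the C[0,1]-norm of B^{[r]}_{n,p,q}(f) is bounded by M(r) times the C^r[0,1]-norm of f. -/
import Mathlib


open Finset Set

/-- The `(p,q)`-integer `[k]_{p,q} = (p^k - q^k)/(p - q)` (so `[0]_{p,q} = 0`). -/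
noncomputable def pqInt (p q : ℝ) (k : ℕ) : ℝ := (p ^ k - q ^ k) / (p - q)

/-- The `(p,q)`-factorial `[k]_{p,q}! = ∏_{j=1}^k [j]_{p,q}` (`[0]_{p,q}! = 1`). -/
noncomputable def pqFact (p q : ℝ) (k : ℕ) : ℝ := ∏ j ∈ Finset.range k, pqInt p q (j + 1)

/-- The `(p,q)`-binomial coefficient. -/
noncomputable def pqBinom (p q : ℝ) (n k : ℕ) : ℝ :=
  pqFact p q n / (pqFact p q k * pqFact p q (n - k))

/-- The `(p,q)`-Bernstein basis function
`P_{n,k}(p,q;x) = p^{k(k-1)/2} [n choose k]_{p,q} x^k ∏_{s=0}^{n-k-1} (p^s - q^s x)`. -/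
noncomputable def pqBern (p q : ℝ) (n k : ℕ) (x : ℝ) : ℝ :=
  p ^ (k * (k - 1) / 2) * pqBinom p q n k * x ^ k *
    ∏ s ∈ Finset.range (n - k), (p ^ s - q ^ s * x)

/-- The node `x_{n,k} = p^{n-k} [k]_{p,q} / [n]_{p,q}`. -/
noncomputable def pqNode (p q : ℝ) (n k : ℕ) : ℝ := p ^ (n - k) * pqInt p q k / pqInt p q n

/-- The `(p,q)`-power central moment
`B_{n,p,q}((t-a)^m_{p,q}; y) = p^{-n(n-1)/2} ∑_{k=0}^n (∏_{s=0}^{m-1}(p^s x_{n,k} - q^s a)) P_{n,k}(p,q;y)`. -/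
noncomputable def pqPowMoment (p q : ℝ) (n m : ℕ) (a y : ℝ) : ℝ :=
  (p ^ (n * (n - 1) / 2))⁻¹ *
    ∑ k ∈ Finset.range (n + 1),
      (∏ s ∈ Finset.range m, (p ^ s * pqNode p q n k - q ^ s * a)) * pqBern p q n k y

/-- The `m`-th absolute central moment
`B_{n,p,q}(|t-x|^m; x) = p^{-n(n-1)/2} ∑_{k=0}^n |x_{n,k} - x|^m P_{n,k}(p,q;x)`. -/
noncomputable def pqAbsMoment (p q : ℝ) (n m : ℕ) (x : ℝ) : ℝ :=
  (p ^ (n * (n - 1) / 2))⁻¹ *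
    ∑ k ∈ Finset.range (n + 1), |pqNode p q n k - x| ^ m * pqBern p q n k x

/-- The ordinary `m`-th central moment
`B_{n,p,q}((t-x)^m; x) = p^{-n(n-1)/2} ∑_{k=0}^n (x_{n,k} - x)^m P_{n,k}(p,q;x)`. -/
noncomputable def pqMoment (p q : ℝ) (n m : ℕ) (x : ℝ) : ℝ :=
  (p ^ (n * (n - 1) / 2))⁻¹ *
    ∑ k ∈ Finset.range (n + 1), (pqNode p q n k - x) ^ m * pqBern p q n k x

/-- The `(p,q)`-Bernstein operator `B_{n,p,q}(f;x)`. -/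
noncomputable def pqBernstein (p q : ℝ) (n : ℕ) (f : ℝ → ℝ) (x : ℝ) : ℝ :=
  (p ^ (n * (n - 1) / 2))⁻¹ *
    ∑ k ∈ Finset.range (n + 1), f (pqNode p q n k) * pqBern p q n k x

/-- The `r`-th order generalization `B^{[r]}_{n,p,q}(f;x)` where `f^{(i)}` is interpreted as
`iteratedDerivWithin i f (Set.Icc 0 1)`. -/
noncomputable def pqBernsteinR (p q : ℝ) (n r : ℕ) (f : ℝ → ℝ) (x : ℝ) : ℝ :=
  (p ^ (n * (n - 1) / 2))⁻¹ *
    ∑ k ∈ Finset.range (n + 1), pqBern p q n k x *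
      ∑ i ∈ Finset.range (r + 1),
        iteratedDerivWithin i f (Set.Icc 0 1) (pqNode p q n k) / (i.factorial : ℝ) *
          (x - pqNode p q n k) ^ i

/-- The modulus of continuity on `[0,1]`:
`ω(g; δ) = sup { |g u - g v| : u, v ∈ [0,1], |u - v| ≤ δ }`. -/
noncomputable def modulusOfContinuity (g : ℝ → ℝ) (δ : ℝ) : ℝ :=
  sSup {d : ℝ | ∃ u ∈ Set.Icc (0 : ℝ) 1, ∃ v ∈ Set.Icc (0 : ℝ) 1, |u - v| ≤ δ ∧ d = |g u - g v|}

section aux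
variable {p q : ℝ}

lemma triaux (k : ℕ) : (k+1)*k/2 = k + k*(k-1)/2 := by
  have h1 : (k+1)*k/2 = (k+1)*((k+1)-1)/2 := by simp
  rw [h1, ← Nat.choose_two_right, ← Nat.choose_two_right,
    Nat.choose_succ_succ, Nat.choose_one_right]

lemma pqInt_pos (hq : 0 < q) (hqp : q < p) {k : ℕ} (hk : 0 < k) :
    0 < pqInt p q k :=
  div_pos (sub_pos.mpr (pow_lt_pow_left₀ hqp hq.le hk.ne')) (sub_pos.mpr hqp)

lemma pqInt_nonneg (hq : 0 < q) (hqp : q < p) (k : ℕ) : 0 ≤ pqInt p q k := by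
  cases k with
  | zero => simp [pqInt]
  | succ m => exact (pqInt_pos hq hqp m.succ_pos).le

lemma pqFact_pos (hq : 0 < q) (hqp : q < p) (k : ℕ) : 0 < pqFact p q k :=
  Finset.prod_pos fun j _ => pqInt_pos hq hqp j.succ_pos

lemma pqFact_succ (k : ℕ) : pqFact p q (k+1) = pqFact p q k * pqInt p q (k+1) :=
  Finset.prod_range_succ _ _

lemma pqBinom_pos (hq : 0 < q) (hqp : q < p) (n k : ℕ) : 0 < pqBinom p q n k :=
  div_pos (pqFact_pos hq hqp n) (mul_pos (pqFact_pos hq hqp k) (pqFact_pos hq hqp (n-k)))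

lemma pqInt_add (hq : 0 < q) (hqp : q < p) (a b : ℕ) :
    pqInt p q (a+b) = p^a * pqInt p q b + q^b * pqInt p q a := by
  unfold pqInt
  have hpq : p - q ≠ 0 := sub_ne_zero.mpr (ne_of_gt hqp)
  field_simp
  ring

lemma pqBinom_pascal (hq : 0 < q) (hqp : q < p) {n k : ℕ} (hk : k < n) :
    pqBinom p q (n+1) (k+1)
      = p^(k+1) * pqBinom p q n (k+1) + q^(n-k) * pqBinom p q n k := by
  obtain ⟨m, rfl⟩ : ∃ m, n = k + 1 + m := ⟨n - (k+1), by omega⟩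
  have e1 : k + 1 + m + 1 - (k + 1) = m + 1 := by omega
  have e2 : k + 1 + m - (k + 1) = m := by omega
  have e3 : k + 1 + m - k = m + 1 := by omega
  unfold pqBinom
  rw [e1, e2, e3]
  have e4 : k + 1 + m + 1 = (k + 1 + m) + 1 := rfl
  rw [e4, pqFact_succ, pqFact_succ, pqFact_succ]
  have e5 : (k + 1 + m) + 1 = (k+1) + (m+1) := by omega
  rw [e5, pqInt_add hq hqp (k+1) (m+1)]
  have hFk := (pqFact_pos (p := p) hq hqp k).ne'
  have hFm := (pqFact_pos (p := p) hq hqp m).ne'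
  have hIk := (pqInt_pos (p := p) hq hqp (Nat.succ_pos k)).ne'
  have hIm := (pqInt_pos (p := p) hq hqp (Nat.succ_pos m)).ne'
  field_simp

lemma pqBinom_self (hq : 0 < q) (hqp : q < p) (n : ℕ) : pqBinom p q n n = 1 := by
  unfold pqBinom
  rw [Nat.sub_self]
  have h0 : pqFact p q 0 = 1 := by simp [pqFact]
  rw [h0, mul_one, div_self (pqFact_pos hq hqp n).ne']

lemma pqBinom_zero (hq : 0 < q) (hqp : q < p) (n : ℕ) : pqBinom p q n 0 = 1 := by
  unfold pqBinom
  have h0 : pqFact p q 0 = 1 := by simp [pqFact]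
  rw [Nat.sub_zero, h0, one_mul, div_self (pqFact_pos hq hqp n).ne']

lemma pqBern_zero (hq : 0 < q) (hqp : q < p) (n : ℕ) (x : ℝ) :
    pqBern p q (n+1) 0 x = (p^n - q^n * x) * pqBern p q n 0 x := by
  unfold pqBern
  rw [pqBinom_zero hq hqp, pqBinom_zero hq hqp, Nat.sub_zero, Nat.sub_zero,
    Finset.prod_range_succ]
  ring

lemma pqBern_top (hq : 0 < q) (hqp : q < p) (n : ℕ) (x : ℝ) :
    pqBern p q (n+1) (n+1) x = p^n * x * pqBern p q n n x := by
  unfold pqBern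
  rw [pqBinom_self hq hqp, pqBinom_self hq hqp, Nat.sub_self, Nat.sub_self]
  simp only [Finset.range_zero, Finset.prod_empty, mul_one]
  have e : (n+1) * ((n+1)-1) / 2 = n + n * (n-1)/2 := by
    simpa using triaux n
  rw [e, pow_add]
  ring

lemma pqBern_rec (hq : 0 < q) (hqp : q < p) {n k : ℕ} (hk : k < n) (x : ℝ) :
    pqBern p q (n+1) (k+1) x
      = p^(k+1) * (p^(n-k-1) - q^(n-k-1) * x) * pqBern p q n (k+1) x
        + p^k * q^(n-k) * x * pqBern p q n k x := by
  obtain ⟨m, rfl⟩ : ∃ m, n = k + 1 + m := ⟨n - (k+1), by omega⟩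
  unfold pqBern
  rw [pqBinom_pascal hq hqp hk]
  have e1 : k + 1 + m + 1 - (k + 1) = m + 1 := by omega
  have e2 : k + 1 + m - (k + 1) = m := by omega
  have e3 : k + 1 + m - k = m + 1 := by omega
  rw [e1, e2, e3]
  simp only [Nat.add_sub_cancel]
  rw [triaux k, pow_add, Finset.prod_range_succ]
  ring

lemma sum_pqBern (hq : 0 < q) (hqp : q < p) (x : ℝ) (n : ℕ) :
    ∑ k ∈ Finset.range (n+1), pqBern p q n k x = p ^ (n*(n-1)/2) := by
  induction n with
  | zero =>
    simp [pqBern, pqBinom_zero hq hqp]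
  | succ n ih =>
    set A : ℕ → ℝ := fun k => p^k * (p^(n-k) - q^(n-k) * x) * pqBern p q n k x with hA
    set B : ℕ → ℝ := fun k => p^k * q^(n-k) * x * pqBern p q n k x with hB
    have hmain : ∑ k ∈ Finset.range (n+2), pqBern p q (n+1) k x
        = ∑ k ∈ Finset.range (n+1), A k + ∑ k ∈ Finset.range (n+1), B k := by
      rw [Finset.sum_range_succ, Finset.sum_range_succ' (fun k => pqBern p q (n+1) k x) n]
      rw [Finset.sum_range_succ' A n, Finset.sum_range_succ B n]
      rw [pqBern_zero hq hqp, pqBern_top hq hqp]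
      have hterm : ∀ k ∈ Finset.range n, pqBern p q (n+1) (k+1) x = A (k+1) + B k := by
        intro k hkmem
        have hk : k < n := Finset.mem_range.mp hkmem
        rw [pqBern_rec hq hqp hk x, hA, hB]
        simp only
        have : n - (k+1) = n - k - 1 := by omega
        rw [this]
      rw [Finset.sum_congr rfl hterm, Finset.sum_add_distrib]
      simp only [hA, hB, Nat.sub_self, Nat.sub_zero, pow_zero]
      ring
    have hAB : ∀ k ∈ Finset.range (n+1), A k + B k = p^n * pqBern p q n k x := by
      intro k hkmem
      have hk : k ≤ n := Nat.lt_succ_iff.mp (Finset.mem_range.mp hkmem)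
      have : p^k * p^(n-k) = p^n := by rw [← pow_add]; congr 1; omega
      simp only [hA, hB]
      rw [← this]
      ring
    rw [hmain, ← Finset.sum_add_distrib, Finset.sum_congr rfl hAB, ← Finset.mul_sum, ih]
    rw [← pow_add]
    congr 1
    have := triaux n
    simpa using this.symm

end aux

lemma pqBern_nonneg (hq : 0 < q) (hqp : q < p) {x : ℝ} (hx : x ∈ Set.Icc (0:ℝ) 1)
    (n k : ℕ) : 0 ≤ pqBern p q n k x := by
  have hp : 0 < p := hq.trans hqp
  unfold pqBern
  apply mul_nonneg (mul_nonneg (mul_nonneg (pow_nonneg hp.le _)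
    (pqBinom_pos hq hqp n k).le) (pow_nonneg hx.1 _))
  apply Finset.prod_nonneg
  intro s _
  have h1 : q^s * x ≤ q^s := by
    nlinarith [pow_pos hq s, hx.2]
  have h2 : q^s ≤ p^s := pow_le_pow_left₀ hq.le hqp.le s
  linarith

lemma pqNode_mem (hq : 0 < q) (hqp : q < p) {n k : ℕ} (hn : 0 < n) (hk : k ≤ n) :
    pqNode p q n k ∈ Set.Icc (0:ℝ) 1 := by
  have hp : 0 < p := hq.trans hqp
  have hIn := pqInt_pos hq hqp hn
  constructor
  · have h1 := pqInt_nonneg hq hqp k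
    have h2 : (0:ℝ) < p ^ (n-k) := pow_pos hp _
    unfold pqNode
    positivity
  · rw [pqNode, div_le_one hIn]
    unfold pqInt
    rw [← mul_div_assoc]
    rw [div_le_div_iff₀ (sub_pos.mpr hqp) (sub_pos.mpr hqp)]
    have h1 : p^(n-k) * p^k = p^n := by rw [← pow_add]; congr 1; omega
    have h2 : q^(n-k) * q^k = q^n := by rw [← pow_add]; congr 1; omega
    have h3 : q^(n-k) * q^k ≤ p^(n-k) * q^k :=
      mul_le_mul_of_nonneg_right (pow_le_pow_left₀ hq.le hqp.le _) (pow_nonneg hq.le k)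
    nlinarith [sub_pos.mpr hqp]

/-- `‖B^{[r]}_{n,p,q} f‖_{C[0,1]} ≤ M(r) ∑_{i=0}^r ‖f^{(i)}‖`. -/
theorem pq_bernsteinR_bound (r : ℕ) :
    ∃ M : ℝ, 0 < M ∧
      ∀ (n : ℕ), 1 ≤ n → ∀ p q : ℝ, 0 < q → q < p → p ≤ 1 →
        ∀ f : ℝ → ℝ, ContDiffOn ℝ r f (Set.Icc 0 1) →
          ∀ x ∈ Set.Icc (0 : ℝ) 1,
            |pqBernsteinR p q n r f x| ≤
              M * ∑ i ∈ Finset.range (r + 1),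
                ⨆ u : Set.Icc (0 : ℝ) 1, |iteratedDerivWithin i f (Set.Icc 0 1) u| := by
  refine ⟨1, one_pos, ?_⟩
  intro n hn p q hq hqp hp1 f hf x hx
  have hp : 0 < p := hq.trans hqp
  set S : ℕ → ℝ := fun i =>
    ⨆ u : Set.Icc (0:ℝ) 1, |iteratedDerivWithin i f (Set.Icc 0 1) u| with hS
  have hbdd : ∀ i ≤ r, BddAbove
      (Set.range fun u : Set.Icc (0:ℝ) 1 => |iteratedDerivWithin i f (Set.Icc 0 1) u|) := by
    intro i hi
    have hc : ContinuousOn (iteratedDerivWithin i f (Set.Icc 0 1)) (Set.Icc 0 1) :=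
      hf.continuousOn_iteratedDerivWithin (by exact_mod_cast hi) (uniqueDiffOn_Icc zero_lt_one)
    have hc' : ContinuousOn (fun u => |iteratedDerivWithin i f (Set.Icc 0 1) u|)
        (Set.Icc 0 1) := hc.abs
    have := (isCompact_Icc (a := (0:ℝ)) (b := 1)).bddAbove_image hc'
    rwa [Set.image_eq_range] at this
  have hub : ∀ i ≤ r, ∀ y ∈ Set.Icc (0:ℝ) 1,
      |iteratedDerivWithin i f (Set.Icc 0 1) y| ≤ S i := by
    intro i hi y hy
    exact le_ciSup (hbdd i hi) ⟨y, hy⟩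
  have hS0 : ∀ i ≤ r, 0 ≤ S i := fun i hi =>
    (abs_nonneg _).trans (hub i hi 0 (by norm_num))
  set C : ℝ := ∑ i ∈ Finset.range (r+1), S i with hC
  have hC0 : 0 ≤ C :=
    Finset.sum_nonneg fun i hi => hS0 i (Nat.lt_succ_iff.mp (Finset.mem_range.mp hi))
  rw [one_mul]
  -- inner bound
  have hinner : ∀ k ∈ Finset.range (n+1),
      |∑ i ∈ Finset.range (r + 1),
        iteratedDerivWithin i f (Set.Icc 0 1) (pqNode p q n k) / (i.factorial : ℝ) *
          (x - pqNode p q n k) ^ i| ≤ C := by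
    intro k hk
    have hkn : k ≤ n := Nat.lt_succ_iff.mp (Finset.mem_range.mp hk)
    have hkn : k ≤ n := Nat.lt_succ_iff.mp (Finset.mem_range.mp hk)
    have hnode := pqNode_mem hq hqp hn hkn
    have hd : |x - pqNode p q n k| ≤ 1 :=
      abs_le.mpr ⟨by linarith [hx.1, hnode.2], by linarith [hx.2, hnode.1]⟩
    calc |∑ i ∈ Finset.range (r + 1),
        iteratedDerivWithin i f (Set.Icc 0 1) (pqNode p q n k) / (i.factorial : ℝ) *
          (x - pqNode p q n k) ^ i|
        ≤ ∑ i ∈ Finset.range (r + 1),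
          |iteratedDerivWithin i f (Set.Icc 0 1) (pqNode p q n k) / (i.factorial : ℝ) *
            (x - pqNode p q n k) ^ i| := Finset.abs_sum_le_sum_abs _ _
      _ ≤ C := by
          apply Finset.sum_le_sum
          intro i hi
          have hir : i ≤ r := Nat.lt_succ_iff.mp (Finset.mem_range.mp hi)
          rw [abs_mul, abs_div, abs_pow, Nat.abs_cast]
          have h1 : |iteratedDerivWithin i f (Set.Icc 0 1) (pqNode p q n k)| ≤ S i :=
            hub i hir _ hnode
          have h2 : |x - pqNode p q n k| ^ i ≤ 1 := pow_le_one₀ (abs_nonneg _) hd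
          have h3 : (1:ℝ) ≤ (i.factorial : ℝ) := Nat.one_le_cast.mpr i.factorial_pos
          have h4 : |iteratedDerivWithin i f (Set.Icc 0 1) (pqNode p q n k)| / (i.factorial : ℝ)
              ≤ |iteratedDerivWithin i f (Set.Icc 0 1) (pqNode p q n k)| :=
            div_le_self (abs_nonneg _) h3
          calc |iteratedDerivWithin i f (Set.Icc 0 1) (pqNode p q n k)| / (i.factorial : ℝ)
              * |x - pqNode p q n k| ^ i
              ≤ |iteratedDerivWithin i f (Set.Icc 0 1) (pqNode p q n k)| * 1 :=
                mul_le_mul h4 h2 (pow_nonneg (abs_nonneg _) _) (abs_nonneg _)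
            _ = |iteratedDerivWithin i f (Set.Icc 0 1) (pqNode p q n k)| := mul_one _
            _ ≤ S i := h1
  have hstep : |∑ k ∈ Finset.range (n + 1), pqBern p q n k x *
      ∑ i ∈ Finset.range (r + 1),
        iteratedDerivWithin i f (Set.Icc 0 1) (pqNode p q n k) / (i.factorial : ℝ) *
          (x - pqNode p q n k) ^ i| ≤ p ^ (n*(n-1)/2) * C := by
    calc |∑ k ∈ Finset.range (n + 1), pqBern p q n k x *
        ∑ i ∈ Finset.range (r + 1),
          iteratedDerivWithin i f (Set.Icc 0 1) (pqNode p q n k) / (i.factorial : ℝ) *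
            (x - pqNode p q n k) ^ i|
        ≤ ∑ k ∈ Finset.range (n + 1), |pqBern p q n k x *
          ∑ i ∈ Finset.range (r + 1),
            iteratedDerivWithin i f (Set.Icc 0 1) (pqNode p q n k) / (i.factorial : ℝ) *
              (x - pqNode p q n k) ^ i| := Finset.abs_sum_le_sum_abs _ _
      _ ≤ ∑ k ∈ Finset.range (n + 1), pqBern p q n k x * C := by
          apply Finset.sum_le_sum
          intro k hk
          rw [abs_mul, abs_of_nonneg (pqBern_nonneg hq hqp hx n k)]
          exact mul_le_mul_of_nonneg_left (hinner k hk) (pqBern_nonneg hq hqp hx n k)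
      _ = (∑ k ∈ Finset.range (n + 1), pqBern p q n k x) * C := (Finset.sum_mul _ _ _).symm
      _ = p ^ (n*(n-1)/2) * C := by rw [sum_pqBern hq hqp]
  rw [pqBernsteinR, abs_mul, abs_inv, abs_pow, abs_of_pos hp]
  calc (p ^ (n*(n-1)/2))⁻¹ * |∑ k ∈ Finset.range (n + 1), pqBern p q n k x *
      ∑ i ∈ Finset.range (r + 1),
        iteratedDerivWithin i f (Set.Icc 0 1) (pqNode p q n k) / (i.factorial : ℝ) *
          (x - pqNode p q n k) ^ i|
      ≤ (p ^ (n*(n-1)/2))⁻¹ * (p ^ (n*(n-1)/2) * C) :=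
        mul_le_mul_of_nonneg_left hstep (inv_nonneg.mpr (pow_nonneg hp.le _))
    _ = C := by
        rw [← mul_assoc, inv_mul_cancel₀ (pow_ne_zero _ hp.ne'), one_mul]
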